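/- Conic weak-duality bound: let g ∈ ℝ^p, B_b > 0, and for k = 1,...,K let A_k be symmetric positive definite, a_k ∈ ℝ^p, d_k ≥ 0. Then sup{ g^T β : β^T β ≤ B_b^2, ‖A_k β‖_2 ≤ a_k^T β + d_k for all k } ≤ ‖g‖_2 · Σ_{k=1}^K (B_b‖a_k‖_2 + d_k)/(K·λ_min(A_k)). -/

import Mathlib

/-! Weak duality without the dual: every cone constraint alone already bounds the feasible set.
Since `λ_min(A_k) ‖β‖ ≤ ‖A_k β‖ ≤ a_kᵀβ + d_k ≤ B_b ‖a_k‖ + d_k`, each `k` gives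
`‖β‖ ≤ (B_b ‖a_k‖ + d_k) / λ_min(A_k)`; averaging these `K` bounds and applying Cauchy–Schwarz
to `gᵀβ` yields the claim. -/

namespace Matrix

variable {n : Type*} [Fintype n]

theorem dotProduct_le_sqrt_mul_sqrt (x y : n → ℝ) :
    x ⬝ᵥ y ≤ √(x ⬝ᵥ x) * √(y ⬝ᵥ y) := by
  simpa [dotProduct, sq] using Real.sum_mul_le_sqrt_mul_sqrt Finset.univ x y

variable [DecidableEq n]

open scoped MatrixOrder in
theorem IsHermitian.iInf_eigenvalues_mul_dotProduct_self_le [Nonempty n] {A : Matrix n n ℝ}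
    (hA : A.IsHermitian) (x : n → ℝ) :
    (⨅ i, hA.eigenvalues i) * (x ⬝ᵥ x) ≤ x ⬝ᵥ A *ᵥ x := by
  -- `λ_min • 1 ≤ A` in the Loewner order, since the spectrum of `A` is the range of its eigenvalues
  have hle : algebraMap ℝ (Matrix n n ℝ) (⨅ i, hA.eigenvalues i) ≤ A := by
    rw [algebraMap_le_iff_le_spectrum hA, hA.spectrum_real_eq_range_eigenvalues]
    rintro _ ⟨i, rfl⟩
    exact ciInf_le (Finite.bddBelow_range _) i
  simpa [sub_mulVec, dotProduct_sub, Algebra.algebraMap_eq_smul_one, smul_mulVec,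
    dotProduct_smul] using (le_iff.mp hle).dotProduct_mulVec_nonneg x

theorem IsHermitian.iInf_eigenvalues_mul_sqrt_le [Nonempty n] {A : Matrix n n ℝ}
    (hA : A.IsHermitian) (x : n → ℝ) :
    (⨅ i, hA.eigenvalues i) * √(x ⬝ᵥ x) ≤ √(A *ᵥ x ⬝ᵥ A *ᵥ x) := by
  rcases (Real.sqrt_nonneg (x ⬝ᵥ x)).eq_or_lt with hx | hx
  · rw [← hx, mul_zero]
    exact Real.sqrt_nonneg _
  refine le_of_mul_le_mul_right ?_ hx
  calc (⨅ i, hA.eigenvalues i) * √(x ⬝ᵥ x) * √(x ⬝ᵥ x)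
      = (⨅ i, hA.eigenvalues i) * (x ⬝ᵥ x) := by
        rw [mul_assoc, Real.mul_self_sqrt (by simpa using dotProduct_self_star_nonneg x)]
    _ ≤ x ⬝ᵥ A *ᵥ x := hA.iInf_eigenvalues_mul_dotProduct_self_le x
    _ ≤ √(x ⬝ᵥ x) * √(A *ᵥ x ⬝ᵥ A *ᵥ x) := dotProduct_le_sqrt_mul_sqrt x _
    _ = √(A *ᵥ x ⬝ᵥ A *ᵥ x) * √(x ⬝ᵥ x) := mul_comm _ _

theorem PosDef.iInf_eigenvalues_pos [Nonempty n] {A : Matrix n n ℝ} (hA : A.PosDef) :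
    0 < ⨅ i, hA.1.eigenvalues i := by
  obtain ⟨i, hi⟩ := Finite.exists_min hA.1.eigenvalues
  exact (hA.eigenvalues_pos i).trans_le (le_ciInf hi)

theorem IsHermitian.iInf_eigenvalues_mul_sqrt_le_of_sqrt_le_dotProduct_add [Nonempty n]
    {A : Matrix n n ℝ} (hA : A.IsHermitian) {a x : n → ℝ} {B d : ℝ} (hx : √(x ⬝ᵥ x) ≤ B)
    (hcone : √(A *ᵥ x ⬝ᵥ A *ᵥ x) ≤ a ⬝ᵥ x + d) :
    (⨅ i, hA.eigenvalues i) * √(x ⬝ᵥ x) ≤ B * √(a ⬝ᵥ a) + d :=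
  calc (⨅ i, hA.eigenvalues i) * √(x ⬝ᵥ x)
      ≤ a ⬝ᵥ x + d := (hA.iInf_eigenvalues_mul_sqrt_le x).trans hcone
    _ ≤ √(a ⬝ᵥ a) * √(x ⬝ᵥ x) + d := by gcongr; exact dotProduct_le_sqrt_mul_sqrt a x
    _ ≤ B * √(a ⬝ᵥ a) + d := by rw [mul_comm B]; gcongr

end Matrix

open Matrix BigOperators

theorem stmt17_general {p K : ℕ} (hp : 0 < p) (hK : 0 < K)
    (g : Fin p → ℝ) (Bb : ℝ) (hBb : 0 < Bb)
    (A : Fin K → Matrix (Fin p) (Fin p) ℝ) (hA : ∀ k, (A k).PosDef)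
    (a : Fin K → Fin p → ℝ) (d : Fin K → ℝ) :
    haveI : Nonempty (Fin p) := Fin.pos_iff_nonempty.mp hp
    ∀ β : Fin p → ℝ, β ⬝ᵥ β ≤ Bb ^ 2 →
      (∀ k, Real.sqrt ((A k).mulVec β ⬝ᵥ (A k).mulVec β) ≤ a k ⬝ᵥ β + d k) →
      g ⬝ᵥ β ≤ Real.sqrt (g ⬝ᵥ g) *
        ∑ k, (Bb * Real.sqrt (a k ⬝ᵥ a k) + d k) /
          ((K : ℝ) * ⨅ i, (hA k).1.eigenvalues i) := by
  have : Nonempty (Fin p) := Fin.pos_iff_nonempty.mp hp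
  intro β hβ hcone
  have hβBb : √(β ⬝ᵥ β) ≤ Bb := (Real.sqrt_le_sqrt hβ).trans_eq (Real.sqrt_sq hBb.le)
  have hK' : (0 : ℝ) < K := Nat.cast_pos.mpr hK
  calc g ⬝ᵥ β ≤ √(g ⬝ᵥ g) * √(β ⬝ᵥ β) := dotProduct_le_sqrt_mul_sqrt g β
    _ = √(g ⬝ᵥ g) * ∑ _k : Fin K, √(β ⬝ᵥ β) / K := by
      rw [Finset.sum_const, Finset.card_univ, Fintype.card_fin, nsmul_eq_mul,
        mul_div_cancel₀ _ hK'.ne']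
    _ ≤ _ := by
      refine mul_le_mul_of_nonneg_left (Finset.sum_le_sum fun k _ => ?_) (Real.sqrt_nonneg _)
      rw [div_mul_eq_div_div_swap]
      gcongr
      rw [le_div_iff₀ (hA k).iInf_eigenvalues_pos, mul_comm]
      exact (hA k).1.iInf_eigenvalues_mul_sqrt_le_of_sqrt_le_dotProduct_add hβBb (hcone k)

/-- Conic weak-duality bound: if β satisfies βᵀβ ≤ B_b² and the second-order cone
constraints ‖A_kβ‖₂ ≤ a_kᵀβ + d_k, then
gᵀβ ≤ ‖g‖₂ · Σ_k (B_b‖a_k‖₂ + d_k)/(K·λ_min(A_k)),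
where λ_min(A_k) = ⨅ i (eigenvalues of A_k). -/
theorem stmt17 {p K : ℕ} (hp : 0 < p) (hK : 0 < K)
    (g : Fin p → ℝ) (Bb : ℝ) (hBb : 0 < Bb)
    (A : Fin K → Matrix (Fin p) (Fin p) ℝ) (hA : ∀ k, (A k).PosDef)
    (a : Fin K → Fin p → ℝ) (d : Fin K → ℝ) (hd : ∀ k, 0 ≤ d k) :
    haveI : Nonempty (Fin p) := Fin.pos_iff_nonempty.mp hp
    ∀ β : Fin p → ℝ, β ⬝ᵥ β ≤ Bb ^ 2 →
      (∀ k, Real.sqrt ((A k).mulVec β ⬝ᵥ (A k).mulVec β) ≤ a k ⬝ᵥ β + d k) →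
      g ⬝ᵥ β ≤ Real.sqrt (g ⬝ᵥ g) *
        ∑ k, (Bb * Real.sqrt (a k ⬝ᵥ a k) + d k) /
          ((K : ℝ) * ⨅ i, (hA k).1.eigenvalues i) :=
  stmt17_general hp hK g Bb hBb A hA a d
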